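/- arXiv:1405.4455 — 3 statements merged into one kernel-verified Lean document; each statement's English description precedes it below -/
import Mathlib

section
/- Let H and K be Hilbert spaces, and let φ: B(H,K) → B(H,K) and ψ: B(K,H) → B(K,H) be linear maps such that Y∘φ(W) = ψ(Y)∘W for all Y ∈ B(K,H) and W ∈ B(H,K). Then there exists an operator D ∈ B(K) such that φ(W) = D∘W for all W ∈ B(H,K) and ψ(Y) = Y∘D for all Y ∈ B(K,H). -/
/-!
Fix `e ∈ E` and a functional `f` with `f e = 1`. Testing the identity on the rank-one operator
`x ↦ f x • k` at `e` forces `D k := φ (f ⊗ k) e`. Since operators `F → E` separate the points of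
`F`, the hypothesis `Y (φ W x) = ψ Y (W x)` shows that `φ W x` depends only on `W x`, whence
`φ W = D ∘ W` and `ψ Y = Y ∘ D`. Finally `g ∘ D = f ∘ ψ (g ⊗ e)` is continuous for every
functional `g`, so `D` has closed graph and is bounded.
-/

section

variable {𝕜 E F : Type*} [NontriviallyNormedField 𝕜]
  [NormedAddCommGroup E] [NormedSpace 𝕜 E] [NormedAddCommGroup F] [NormedSpace 𝕜 F]

theorem eq_of_forall_continuousLinearMap_apply_eq [Nontrivial E] [SeparatingDual 𝕜 F] {a b : F}
    (h : ∀ Y : F →L[𝕜] E, Y a = Y b) : a = b := by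
  obtain ⟨e, he⟩ := exists_ne (0 : E)
  refine (SeparatingDual.eq_iff_forall_dual_eq (R := 𝕜)).2 fun g => smul_left_injective 𝕜 he ?_
  simpa using h (g.smulRight e)

theorem LinearMap.continuous_of_forall_dual_comp_continuous [CompleteSpace E] [CompleteSpace F]
    [SeparatingDual 𝕜 F] (T : E →ₗ[𝕜] F) (hT : ∀ g : StrongDual 𝕜 F, Continuous (g ∘ T)) :
    Continuous T := by
  refine T.continuous_of_seq_closed_graph fun u x y hu hTu => ?_
  refine (SeparatingDual.eq_iff_forall_dual_eq (R := 𝕜)).2 fun g => ?_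
  exact tendsto_nhds_unique ((g.continuous.tendsto y).comp hTu) (((hT g).tendsto x).comp hu)

section Intertwining

variable (φ : (E →L[𝕜] F) →ₗ[𝕜] (E →L[𝕜] F)) (ψ : (F →L[𝕜] E) →ₗ[𝕜] (F →L[𝕜] E))
  (f : StrongDual 𝕜 E) (e : E)

noncomputable def intertwiner : F →ₗ[𝕜] F :=
  (ContinuousLinearMap.apply 𝕜 F e).toLinearMap ∘ₗ φ ∘ₗ
    (ContinuousLinearMap.smulRightL 𝕜 E F f).toLinearMap

variable {φ ψ f e}

theorem intertwiner_apply (k : F) : intertwiner φ f e k = φ (f.smulRight k) e := rfl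

theorem map_apply_eq_apply_intertwiner (h : ∀ Y W, Y.comp (φ W) = (ψ Y).comp W) (hfe : f e = 1)
    (Y : F →L[𝕜] E) (k : F) : ψ Y k = Y (intertwiner φ f e k) := by
  simpa [hfe, intertwiner_apply] using congr($(h Y (f.smulRight k)) e).symm

theorem map_apply_eq_intertwiner_apply [Nontrivial E] [SeparatingDual 𝕜 F]
    (h : ∀ Y W, Y.comp (φ W) = (ψ Y).comp W) (hfe : f e = 1) (W : E →L[𝕜] F) (x : E) :
    φ W x = intertwiner φ f e (W x) :=
  eq_of_forall_continuousLinearMap_apply_eq fun Y => by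
    rw [← map_apply_eq_apply_intertwiner h hfe, ← ContinuousLinearMap.comp_apply, h]; rfl

theorem continuous_intertwiner [CompleteSpace F] [SeparatingDual 𝕜 F]
    (h : ∀ Y W, Y.comp (φ W) = (ψ Y).comp W) (hfe : f e = 1) :
    Continuous (intertwiner φ f e) := by
  refine LinearMap.continuous_of_forall_dual_comp_continuous _ fun g => ?_
  have hg : g ∘ intertwiner φ f e = f ∘ ψ (g.smulRight e) := by
    ext k
    simp [map_apply_eq_apply_intertwiner h hfe, hfe]
  rw [hg]
  fun_prop

end Intertwining

theorem exists_comp_eq_of_comp_map_eq_map_comp [CompleteSpace F] [SeparatingDual 𝕜 E]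
    [SeparatingDual 𝕜 F]
    (φ : (E →L[𝕜] F) →ₗ[𝕜] (E →L[𝕜] F)) (ψ : (F →L[𝕜] E) →ₗ[𝕜] (F →L[𝕜] E))
    (h : ∀ Y W, Y.comp (φ W) = (ψ Y).comp W) :
    ∃ D : F →L[𝕜] F, (∀ W, φ W = D.comp W) ∧ ∀ Y, ψ Y = Y.comp D := by
  rcases subsingleton_or_nontrivial E with _ | _
  · exact ⟨0, fun _ => Subsingleton.elim _ _, fun _ => Subsingleton.elim _ _⟩
  obtain ⟨e, he⟩ := exists_ne (0 : E)
  obtain ⟨f, hfe⟩ := SeparatingDual.exists_eq_one (R := 𝕜) he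
  refine ⟨⟨intertwiner φ f e, continuous_intertwiner h hfe⟩, fun W => ?_, fun Y => ?_⟩
  · ext x
    exact map_apply_eq_intertwiner_apply h hfe W x
  · ext k
    exact map_apply_eq_apply_intertwiner h hfe Y k

end

theorem stmt0_general {H K : Type*}
    [NormedAddCommGroup H] [InnerProductSpace ℂ H]
    [NormedAddCommGroup K] [InnerProductSpace ℂ K] [CompleteSpace K]
    (φ : (H →L[ℂ] K) →ₗ[ℂ] (H →L[ℂ] K))
    (ψ : (K →L[ℂ] H) →ₗ[ℂ] (K →L[ℂ] H))
    (h : ∀ (Y : K →L[ℂ] H) (W : H →L[ℂ] K), Y.comp (φ W) = (ψ Y).comp W) :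
    ∃ D : K →L[ℂ] K, (∀ W : H →L[ℂ] K, φ W = D.comp W) ∧
      (∀ Y : K →L[ℂ] H, ψ Y = Y.comp D) :=
  exists_comp_eq_of_comp_map_eq_map_comp φ ψ h

/-- Theorem 2.2: if Y∘φ(W) = ψ(Y)∘W for all Y ∈ B(K,H), W ∈ B(H,K), then
there is D ∈ B(K) with φ(W) = D∘W and ψ(Y) = Y∘D. -/
theorem stmt0 {H K : Type*}
    [NormedAddCommGroup H] [InnerProductSpace ℂ H] [CompleteSpace H]
    [NormedAddCommGroup K] [InnerProductSpace ℂ K] [CompleteSpace K]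
    (φ : (H →L[ℂ] K) →ₗ[ℂ] (H →L[ℂ] K))
    (ψ : (K →L[ℂ] H) →ₗ[ℂ] (K →L[ℂ] H))
    (h : ∀ (Y : K →L[ℂ] H) (W : H →L[ℂ] K), Y.comp (φ W) = (ψ Y).comp W) :
    ∃ D : K →L[ℂ] K, (∀ W : H →L[ℂ] K, φ W = D.comp W) ∧
      (∀ Y : K →L[ℂ] H, ψ Y = Y.comp D) :=
  stmt0_general φ ψ h
end

section
/- Let H₁ and H₂ be Hilbert spaces and A₁₁: B(H₁) → B(H₁) a linear map. Suppose there exists a linear map B₁₂: B(H₂,H₁) → B(H₂,H₁) such that B₁₂(X∘V) = X∘B₁₂(V) + A₁₁(X)∘V for all X ∈ B(H₁) and V ∈ B(H₂,H₁), and assume H₂ ≠ 0. Then A₁₁ is a derivation on B(H₁). -/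
/-!
Expanding `B₁₂ (X₁ X₂ V)` once as `B₁₂ ((X₁ X₂) V)` and once as `B₁₂ (X₁ (X₂ V))` shows that
`A₁₁ (X₁ X₂)` and `A₁₁ X₁ X₂ + X₁ A₁₁ X₂` agree after composition with every `V : H₂ →L H₁`.
Since `H₂ ≠ 0`, the rank-one operators `V = φ.smulRight w` with `φ v = 1` hit every `w ∈ H₁`,
so the two operators are equal.
-/

namespace ContinuousLinearMap

theorem ext_of_forall_comp_eq {R E F G : Type*} [Field R] [TopologicalSpace R]
    [IsTopologicalRing R]
    [AddCommGroup E] [TopologicalSpace E] [Module R E] [ContinuousSMul R E]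
    [AddCommGroup F] [TopologicalSpace F] [Module R F] [SeparatingDual R F] [Nontrivial F]
    [AddCommGroup G] [TopologicalSpace G] [Module R G]
    {S T : E →L[R] G} (h : ∀ V : F →L[R] E, S.comp V = T.comp V) : S = T := by
  obtain ⟨v, hv⟩ := exists_ne (0 : F)
  obtain ⟨φ, hφ⟩ := SeparatingDual.exists_eq_one (R := R) hv
  ext w
  simpa [hφ] using congr($(h (φ.smulRight w)) v)

theorem apply_mul_comp_eq {R E F : Type*} [Ring R]
    [AddCommGroup E] [TopologicalSpace E] [IsTopologicalAddGroup E] [Module R E]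
    [AddCommGroup F] [TopologicalSpace F] [Module R F]
    (A : (E →L[R] E) → (E →L[R] E)) (B : (F →L[R] E) → (F →L[R] E))
    (hB : ∀ X V, B (X.comp V) = X.comp (B V) + (A X).comp V) (X₁ X₂ : E →L[R] E)
    (V : F →L[R] E) :
    (A (X₁ * X₂)).comp V = (A X₁ * X₂ + X₁ * A X₂).comp V := by
  have h := hB (X₁ * X₂) V
  rw [mul_def, comp_assoc, hB, hB, comp_add, add_assoc] at h
  simpa [mul_def, comp_assoc, add_comm] using (add_left_cancel h).symm

end ContinuousLinearMap

open ContinuousLinearMap in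
theorem stmt11_general {H₁ H₂ : Type*}
    [NormedAddCommGroup H₁] [InnerProductSpace ℂ H₁]
    [NormedAddCommGroup H₂] [InnerProductSpace ℂ H₂]
    [Nontrivial H₂]
    (A₁₁ : (H₁ →L[ℂ] H₁) →ₗ[ℂ] (H₁ →L[ℂ] H₁))
    (B₁₂ : (H₂ →L[ℂ] H₁) →ₗ[ℂ] (H₂ →L[ℂ] H₁))
    (h : ∀ (X : H₁ →L[ℂ] H₁) (V : H₂ →L[ℂ] H₁),
      B₁₂ (X.comp V) = X.comp (B₁₂ V) + (A₁₁ X).comp V) :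
    ∀ X₁ X₂ : H₁ →L[ℂ] H₁,
      A₁₁ (X₁ * X₂) = A₁₁ X₁ * X₂ + X₁ * A₁₁ X₂ := fun X₁ X₂ =>
  ext_of_forall_comp_eq (F := H₂) (apply_mul_comp_eq A₁₁ B₁₂ h X₁ X₂)

/-- Step 3: if B₁₂(X∘V) = X∘B₁₂(V) + A₁₁(X)∘V for all X ∈ B(H₁),
V ∈ B(H₂,H₁), with H₂ ≠ 0, then A₁₁ is a derivation on B(H₁). -/
theorem stmt11 {H₁ H₂ : Type*}
    [NormedAddCommGroup H₁] [InnerProductSpace ℂ H₁] [CompleteSpace H₁]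
    [NormedAddCommGroup H₂] [InnerProductSpace ℂ H₂] [CompleteSpace H₂]
    [Nontrivial H₂]
    (A₁₁ : (H₁ →L[ℂ] H₁) →ₗ[ℂ] (H₁ →L[ℂ] H₁))
    (B₁₂ : (H₂ →L[ℂ] H₁) →ₗ[ℂ] (H₂ →L[ℂ] H₁))
    (h : ∀ (X : H₁ →L[ℂ] H₁) (V : H₂ →L[ℂ] H₁),
      B₁₂ (X.comp V) = X.comp (B₁₂ V) + (A₁₁ X).comp V) :
    ∀ X₁ X₂ : H₁ →L[ℂ] H₁,
      A₁₁ (X₁ * X₂) = A₁₁ X₁ * X₂ + X₁ * A₁₁ X₂ :=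
  stmt11_general A₁₁ B₁₂ h
end

section
/- Let H be a complex Hilbert space. Every derivation δ: B(H) → B(H) (a linear map satisfying δ(ST) = δ(S)T + Sδ(T) for all S,T) is inner: there exists A ∈ B(H) such that δ(X) = XA − AX for all X. -/
/-!
Fix `e ≠ 0` and a functional `f` with `f e = 1`, and put `D v := δ (f ⊗ v) e`, where
`f ⊗ v` is the rank-one operator `x ↦ f x • v`. Applying the Leibniz rule to `X * (f ⊗ v) = f ⊗ X v`
and evaluating at `e` gives `δ X = D X - X D`, so `A := -D` works once `D` is known to be bounded.
Taking `X = φ ⊗ e` in this identity expresses `φ ∘ D` through bounded maps for every functional `φ`;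
hence `D` is weakly continuous, and so continuous by the closed graph theorem.
-/

theorem LinearMap.continuous_of_forall_continuous_dual_comp
    {𝕜 E F : Type*} [NontriviallyNormedField 𝕜]
    [NormedAddCommGroup E] [NormedSpace 𝕜 E] [CompleteSpace E]
    [NormedAddCommGroup F] [NormedSpace 𝕜 F] [CompleteSpace F] [SeparatingDual 𝕜 F]
    (T : E →ₗ[𝕜] F) (hT : ∀ φ : StrongDual 𝕜 F, Continuous fun v => φ (T v)) :
    Continuous T := by
  refine T.continuous_of_seq_closed_graph fun u x y hu hTu => ?_
  refine (SeparatingDual.eq_iff_forall_dual_eq (R := 𝕜)).2 fun φ => ?_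
  exact tendsto_nhds_unique ((φ.continuous.tendsto y).comp hTu) (((hT φ).tendsto x).comp hu)

section Derivation

variable {𝕜 E : Type*} [NontriviallyNormedField 𝕜] [NormedAddCommGroup E] [NormedSpace 𝕜 E]

noncomputable def implementingMap (δ : (E →L[𝕜] E) →ₗ[𝕜] (E →L[𝕜] E)) (f : StrongDual 𝕜 E)
    (e : E) : E →ₗ[𝕜] E :=
  (ContinuousLinearMap.apply 𝕜 E e).toLinearMap ∘ₗ δ ∘ₗ
    (ContinuousLinearMap.smulRightL 𝕜 E E f).toLinearMap

variable {δ : (E →L[𝕜] E) →ₗ[𝕜] (E →L[𝕜] E)} {f : StrongDual 𝕜 E} {e : E}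

theorem implementingMap_apply (v : E) : implementingMap δ f e v = δ (f.smulRight v) e := rfl

theorem apply_eq_implementingMap_sub (hδ : ∀ S T, δ (S * T) = δ S * T + S * δ T)
    (hfe : f e = 1) (X : E →L[𝕜] E) (v : E) :
    δ X v = implementingMap δ f e (X v) - X (implementingMap δ f e v) := by
  have hX : X * f.smulRight v = f.smulRight (X v) := by ext; simp
  have h := congr($(hδ X (f.smulRight v)) e)
  simp only [hX, add_apply, mul_apply_eq_comp, ContinuousLinearMap.smulRight_apply, hfe,
    one_smul] at h
  rw [implementingMap_apply, implementingMap_apply, h]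
  abel

theorem continuous_implementingMap [CompleteSpace E] [SeparatingDual 𝕜 E]
    (hδ : ∀ S T, δ (S * T) = δ S * T + S * δ T) (hfe : f e = 1) :
    Continuous (implementingMap δ f e) := by
  refine LinearMap.continuous_of_forall_continuous_dual_comp _ fun φ => ?_
  have hφ : (fun v => φ (implementingMap δ f e v)) =
      fun v => φ v * f (implementingMap δ f e e) - f (δ (φ.smulRight e) v) := by
    ext v
    have h := congr(f $(apply_eq_implementingMap_sub hδ hfe (φ.smulRight e) v))
    simp only [ContinuousLinearMap.smulRight_apply, map_smul, map_sub, smul_eq_mul, hfe,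
      mul_one] at h
    rw [h]
    ring
  rw [hφ]
  fun_prop

theorem exists_eq_mul_sub_mul_of_leibniz [CompleteSpace E] [SeparatingDual 𝕜 E]
    (hδ : ∀ S T, δ (S * T) = δ S * T + S * δ T) :
    ∃ A : E →L[𝕜] E, ∀ X, δ X = X * A - A * X := by
  obtain hE | hE := subsingleton_or_nontrivial E
  · exact ⟨0, fun X => Subsingleton.elim _ _⟩
  obtain ⟨e, he⟩ := exists_ne (0 : E)
  obtain ⟨f, hfe⟩ := SeparatingDual.exists_eq_one (R := 𝕜) he
  refine ⟨-⟨implementingMap δ f e, continuous_implementingMap hδ hfe⟩, fun X => ?_⟩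
  ext v
  simp only [apply_eq_implementingMap_sub hδ hfe X v, mul_neg, neg_mul, sub_neg_eq_add,
    add_apply, neg_apply, mul_apply_eq_comp, ContinuousLinearMap.coe_mk']
  abel

end Derivation

/-- Every derivation on B(H) is inner. -/
theorem stmt13 {H : Type*} [NormedAddCommGroup H] [InnerProductSpace ℂ H]
    [CompleteSpace H]
    (δ : (H →L[ℂ] H) →ₗ[ℂ] (H →L[ℂ] H))
    (hδ : ∀ S T : H →L[ℂ] H, δ (S * T) = δ S * T + S * δ T) :
    ∃ A : H →L[ℂ] H, ∀ X : H →L[ℂ] H, δ X = X * A - A * X :=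
  exists_eq_mul_sub_mul_of_leibniz hδ
end
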